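/- arXiv:1802.05990 — 8 statements merged into one kernel-verified Lean document; each statement's English description precedes it below -/
import Mathlib

section
/- For all positive integers n, the determinant of the n×n Hankel matrix whose (i,j) entry is the Catalan number C_{i+j} equals 1. -/
open Finset Matrix

/-- Ballot-type numbers: `Bk m k = C(2m, m+k) - C(2m, m+k+1)`. -/
def Bk (m k : ℕ) : ℤ := ((2*m).choose (m+k) : ℤ) - ((2*m).choose (m+k+1) : ℤ)

lemma Bk_eq_zero {m k : ℕ} (h : m < k) : Bk m k = 0 := by
  unfold Bk
  rw [Nat.choose_eq_zero_of_lt (by omega), Nat.choose_eq_zero_of_lt (by omega)]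
  simp

lemma Bk_diag (m : ℕ) : Bk m m = 1 := by
  unfold Bk
  rw [show m + m = 2*m by ring, Nat.choose_self,
    Nat.choose_eq_zero_of_lt (by omega)]
  simp

lemma double_pascal (m i : ℕ) :
    ((2*m+2).choose (i+2) : ℤ)
      = (2*m).choose i + 2*(2*m).choose (i+1) + (2*m).choose (i+2) := by
  have : (2*m+2).choose (i+2)
      = (2*m).choose i + 2*(2*m).choose (i+1) + (2*m).choose (i+2) := by
    rw [Nat.choose_succ_succ (2*m+1) (i+1), Nat.choose_succ_succ (2*m) i,
      Nat.choose_succ_succ (2*m) (i+1)]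
    ring
  exact_mod_cast this

lemma Bk_rec_succ (m k : ℕ) :
    Bk (m+1) (k+1) = Bk m k + 2 * Bk m (k+1) + Bk m (k+2) := by
  unfold Bk
  have h2 : 2*(m+1) = 2*m+2 := by ring
  rw [h2, show m+1+(k+1) = (m+k)+2 by ring, show (m+k)+2+1 = (m+k+1)+2 by ring,
    double_pascal m (m+k), double_pascal m (m+k+1)]
  -- push_cast (no-op)
  ring_nf

lemma Bk_rec_zero (m : ℕ) : Bk (m+1) 0 = Bk m 0 + Bk m 1 := by
  match m with
  | 0 => decide
  | s+1 =>
    unfold Bk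
    have h2 : 2*(s+1+1) = 2*(s+1)+2 := by ring
    rw [h2, show s+1+1+0 = s+2 by ring, show s+2+1 = (s+1)+2 by ring,
      double_pascal (s+1) s, double_pascal (s+1) (s+1)]
    have hsym : (2*(s+1)).choose s = (2*(s+1)).choose (s+2) := by
      have := Nat.choose_symm (n := 2*(s+1)) (k := s+2) (by omega)
      rw [show 2*(s+1) - (s+2) = s by omega] at this
      exact this
    rw [hsym]
    -- push_cast (no-op)
    ring_nf

lemma catalan_eq_Bk_zero (n : ℕ) : (catalan n : ℤ) = Bk n 0 := by
  have hc : ((2*n).choose (n+1)) * (n+1) = (2*n).choose n * n := by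
    have := Nat.choose_succ_right_eq (2*n) n
    rwa [show 2*n - n = n by omega] at this
  have hcb : ((n : ℤ) + 1) * catalan n = (2*n).choose n := by
    have := succ_mul_catalan_eq_centralBinom n
    have h2 : n.centralBinom = (2*n).choose n := rfl
    rw [h2] at this
    exact_mod_cast this
  have key : ((n : ℤ) + 1) * catalan n = ((n : ℤ)+1) * Bk n 0 := by
    unfold Bk
    have hcZ : ((2*n).choose (n+1) : ℤ) * ((n:ℤ)+1) = ((2*n).choose n : ℤ) * n := by
      exact_mod_cast hc
    rw [hcb]
    -- push_cast (no-op)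
    simp only [Nat.add_zero, add_zero]
    linarith
  have hne : ((n : ℤ) + 1) ≠ 0 := by positivity
  exact mul_left_cancel₀ hne key

lemma shift_sum (f : ℕ → ℤ) (L : ℕ) :
    ∑ k ∈ range L, f (k+1) = (∑ k ∈ range L, f k) + f L - f 0 := by
  have h1 := Finset.sum_range_succ' f L
  have h2 := Finset.sum_range_succ f L
  omega

lemma shuffle (m n L : ℕ) (hm : m ≤ L) (hn : n ≤ L) :
    ∑ k ∈ range (L+1), Bk (m+1) k * Bk n k
      = ∑ k ∈ range (L+1), Bk m k * Bk (n+1) k := by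
  rw [Finset.sum_range_succ' (fun k => Bk (m+1) k * Bk n k) L,
      Finset.sum_range_succ' (fun k => Bk m k * Bk (n+1) k) L]
  simp only [Bk_rec_zero, Bk_rec_succ]
  have expandL : ∀ k, (Bk m k + 2 * Bk m (k+1) + Bk m (k+2)) * Bk n (k+1)
      = Bk m k * Bk n (k+1) + 2 * (Bk m (k+1) * Bk n (k+1))
        + Bk m (k+2) * Bk n (k+1) := by intro k; ring
  have expandR : ∀ k, Bk m (k+1) * (Bk n k + 2 * Bk n (k+1) + Bk n (k+2))
      = Bk m (k+1) * Bk n k + 2 * (Bk m (k+1) * Bk n (k+1))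
        + Bk m (k+1) * Bk n (k+2) := by intro k; ring
  simp only [expandL, expandR, Finset.sum_add_distrib]
  have hR : ∑ k ∈ range L, Bk m (k+2) * Bk n (k+1)
      = (∑ k ∈ range L, Bk m (k+1) * Bk n k) + Bk m (L+1) * Bk n L
        - Bk m 1 * Bk n 0 := shift_sum (fun k => Bk m (k+1) * Bk n k) L
  have hR' : ∑ k ∈ range L, Bk m (k+1) * Bk n (k+2)
      = (∑ k ∈ range L, Bk m k * Bk n (k+1)) + Bk m L * Bk n (L+1)
        - Bk m 0 * Bk n 1 := shift_sum (fun k => Bk m k * Bk n (k+1)) L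
  rw [Bk_eq_zero (show m < L+1 by omega)] at hR
  rw [Bk_eq_zero (show n < L+1 by omega)] at hR'
  simp only [zero_mul, mul_zero] at hR hR'
  rw [hR, hR']
  ring

lemma key_sum : ∀ m n N : ℕ, m + n + 1 ≤ N →
    ∑ k ∈ range N, Bk m k * Bk n k = catalan (m+n) := by
  intro m
  induction m with
  | zero =>
    intro n N hN
    rw [Finset.sum_eq_single_of_mem 0 (Finset.mem_range.mpr (by omega))]
    · rw [Bk_diag 0, one_mul, zero_add, catalan_eq_Bk_zero]
    · intro k _ hk
      rw [Bk_eq_zero (show 0 < k by omega), zero_mul]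
  | succ m ih =>
    intro n N hN
    obtain ⟨L, rfl⟩ : ∃ L, N = L + 1 := ⟨N - 1, by omega⟩
    rw [shuffle m n L (by omega) (by omega)]
    rw [ih (n+1) (L+1) (by omega), show m+(n+1) = m+1+n by omega]

theorem catalan_hankel_det (n : ℕ) (hn : 0 < n) :
    (Matrix.of fun i j : Fin n => (catalan (i.1 + j.1) : ℤ)).det = 1 := by
  set L : Matrix (Fin n) (Fin n) ℤ := Matrix.of fun i k : Fin n => Bk i.1 k.1 with hL
  have hM : (Matrix.of fun i j : Fin n => (catalan (i.1 + j.1) : ℤ)) = L * Lᵀ := by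
    ext i j
    simp only [Matrix.mul_apply, Matrix.transpose_apply, hL, Matrix.of_apply]
    rw [Fin.sum_univ_eq_sum_range (fun k => Bk i.1 k * Bk j.1 k) n]
    set N := max n (i.1 + j.1 + 1) with hN
    have hsub : ∑ k ∈ range n, Bk i.1 k * Bk j.1 k
        = ∑ k ∈ range N, Bk i.1 k * Bk j.1 k := by
      apply Finset.sum_subset
      · apply Finset.range_subset_range.mpr; omega
      · intro k _ hk
        rw [Finset.mem_range, not_lt] at hk
        rw [Bk_eq_zero (show i.1 < k by omega), zero_mul]
    rw [hsub, key_sum i.1 j.1 N (by omega)]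
  have hLtri : L.BlockTriangular OrderDual.toDual := by
    intro i j hij
    exact Bk_eq_zero (show i.1 < j.1 from hij)
  have hdetL : L.det = 1 := by
    rw [Matrix.det_of_lowerTriangular L hLtri]
    apply Finset.prod_eq_one
    intro i _
    exact Bk_diag i.1
  rw [hM, Matrix.det_mul, Matrix.det_transpose, hdetL]
  norm_num
end

section
/- For all positive integers n, the determinant of the n×n Hankel matrix whose (i,j) entry is the Catalan number C_{i+j+1} equals 1. -/
open Finset Matrix

private lemma vand (a b t : ℕ) (h : a ≤ t) :
    ∑ j ∈ range (a + 1), a.choose j * b.choose (t - j) = (a + b).choose t := by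
  rw [Nat.add_choose_eq, Finset.Nat.sum_antidiagonal_eq_sum_range_succ_mk]
  apply Finset.sum_subset (Finset.range_subset_range.2 (by omega))
  intro j hj hnj
  simp only [Finset.mem_range] at hj hnj
  rw [Nat.choose_eq_zero_of_lt (by omega), zero_mul]

private lemma catalan_cast (N : ℕ) :
    (((2 * N).choose N : ℤ)) - (2 * N).choose (N + 1) = catalan N := by
  have h1 : (2 * N).choose (N + 1) * (N + 1) = (2 * N).choose N * N := by
    rw [Nat.choose_succ_right_eq]
    congr 1
    omega
  have h2 : (N + 1) * catalan N = (2 * N).choose N :=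
    succ_mul_catalan_eq_centralBinom N
  have hN : ((N : ℤ) + 1) ≠ 0 := by positivity
  apply mul_left_cancel₀ hN
  have h1' : ((2 * N).choose (N + 1) : ℤ) * (N + 1) = (2 * N).choose N * N := by
    exact_mod_cast congrArg (Nat.cast : ℕ → ℤ) h1
  have h2' : ((N : ℤ) + 1) * catalan N = (2 * N).choose N := by
    exact_mod_cast congrArg (Nat.cast : ℕ → ℤ) h2
  ring_nf
  ring_nf at h1' h2'
  linarith

private lemma key (m n : ℕ) (h : m ≤ n) :
    ∑ k ∈ range (m + 1),
      (((2 * m + 1).choose (m - k) : ℤ) - (2 * m + 1).choose (m + k + 2)) *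
        (((2 * n + 1).choose (n - k) : ℤ) - (2 * n + 1).choose (n + k + 2)) =
      catalan (m + n + 1) := by
  set G : ℕ → ℤ := fun j =>
    ((2 * m + 1).choose j : ℤ) *
      (((2 * n + 1).choose (m + n + 1 - j) : ℤ) - (2 * n + 1).choose (m + n + 2 - j)) with hG
  have step1 : ∑ k ∈ range (m + 1),
      (((2 * m + 1).choose (m - k) : ℤ) - (2 * m + 1).choose (m + k + 2)) *
        (((2 * n + 1).choose (n - k) : ℤ) - (2 * n + 1).choose (n + k + 2)) =
      ∑ k ∈ range (m + 1), (G (m - k) + G (m + k + 2)) := by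
    apply Finset.sum_congr rfl
    intro k hk
    simp only [Finset.mem_range] at hk
    have hkm : k ≤ m := by omega
    have e1 : m + n + 1 - (m - k) = n + k + 1 := by omega
    have e2 : m + n + 2 - (m - k) = n + k + 2 := by omega
    have e3 : m + n + 1 - (m + k + 2) = n - k - 1 := by omega
    have e4 : m + n + 2 - (m + k + 2) = n - k := by omega
    have s1 : (2 * n + 1).choose (n - k) = (2 * n + 1).choose (n + k + 1) := by
      rw [← Nat.choose_symm (by omega : n + k + 1 ≤ 2 * n + 1)]
      congr 1
      omega
    rw [hG]
    simp only [e1, e2, e3, e4]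
    rcases Nat.lt_or_ge k n with hkn | hkn
    · have s2 : (2 * n + 1).choose (n - k - 1) = (2 * n + 1).choose (n + k + 2) := by
        rw [← Nat.choose_symm (by omega : n + k + 2 ≤ 2 * n + 1)]
        congr 1
        omega
      rw [s1, s2]
      ring
    · -- k = m = n
      have hk2 : k = n := by omega
      have hz : (2 * m + 1).choose (m + k + 2) = 0 :=
        Nat.choose_eq_zero_of_lt (by omega)
      rw [hz, s1]
      push_cast
      ring
  rw [step1, Finset.sum_add_distrib]
  have r1 : ∑ k ∈ range (m + 1), G (m - k) = ∑ j ∈ range (m + 1), G j := by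
    have := Finset.sum_range_reflect G (m + 1)
    simpa using this
  have r2 : ∑ k ∈ range (m + 1), G (m + k + 2) = ∑ j ∈ Ico (m + 2) (2 * m + 3), G j := by
    rw [Finset.sum_Ico_eq_sum_range]
    have : 2 * m + 3 - (m + 2) = m + 1 := by omega
    rw [this]
    apply Finset.sum_congr rfl
    intro k _
    congr 1
    omega
  have gm1 : G (m + 1) = 0 := by
    rw [hG]
    have e1 : m + n + 1 - (m + 1) = n := by omega
    have e2 : m + n + 2 - (m + 1) = n + 1 := by omega
    simp only [e1, e2]
    have : (2 * n + 1).choose n = (2 * n + 1).choose (n + 1) := by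
      rw [← Nat.choose_symm (by omega : n + 1 ≤ 2 * n + 1)]
      congr 1
      omega
    rw [this]
    ring
  have g2m2 : G (2 * m + 2) = 0 := by
    have hz : (2 * m + 1).choose (2 * m + 2) = 0 := Nat.choose_eq_zero_of_lt (by omega)
    simp [hG, hz]
  have split : ∑ j ∈ range (2 * m + 3), G j =
      (∑ j ∈ range (m + 1), G j + G (m + 1)) + ∑ j ∈ Ico (m + 2) (2 * m + 3), G j := by
    rw [← Finset.sum_range_succ]
    simp only [Finset.range_eq_Ico]
    exact (Finset.sum_Ico_consecutive G (by omega) (by omega)).symm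
  have total : ∑ j ∈ range (m + 1), G j + ∑ j ∈ Ico (m + 2) (2 * m + 3), G j =
      ∑ j ∈ range (2 * m + 2), G j := by
    have hs := Finset.sum_range_succ G (2 * m + 2)
    rw [split, gm1, g2m2] at hs
    linarith
  rw [r1, r2, total, hG]
  have expand : ∑ j ∈ range (2 * m + 2),
      ((2 * m + 1).choose j : ℤ) *
        (((2 * n + 1).choose (m + n + 1 - j) : ℤ) - (2 * n + 1).choose (m + n + 2 - j)) =
      ((∑ j ∈ range (2 * m + 2), (2 * m + 1).choose j * (2 * n + 1).choose (m + n + 1 - j) : ℕ) : ℤ)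
        - ((∑ j ∈ range (2 * m + 2), (2 * m + 1).choose j * (2 * n + 1).choose (m + n + 2 - j) : ℕ) : ℤ) := by
    push_cast
    rw [← Finset.sum_sub_distrib]
    apply Finset.sum_congr rfl
    intro j _
    ring
  rw [expand, vand (2 * m + 1) (2 * n + 1) (m + n + 1) (by omega),
    vand (2 * m + 1) (2 * n + 1) (m + n + 2) (by omega)]
  have e : 2 * m + 1 + (2 * n + 1) = 2 * (m + n + 1) := by ring
  rw [e]
  exact catalan_cast (m + n + 1)

private lemma key' (m n N : ℕ) (hm : m < N) (hn : n < N) :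
    ∑ k ∈ range N,
      (if k ≤ m then ((2 * m + 1).choose (m - k) : ℤ) - (2 * m + 1).choose (m + k + 2) else 0) *
        (if k ≤ n then ((2 * n + 1).choose (n - k) : ℤ) - (2 * n + 1).choose (n + k + 2) else 0) =
      catalan (m + n + 1) := by
  rcases le_total m n with h | h
  · have sub : ∑ k ∈ range N, _ = ∑ k ∈ range (m + 1),
        (if k ≤ m then ((2 * m + 1).choose (m - k) : ℤ) - (2 * m + 1).choose (m + k + 2) else 0) *
          (if k ≤ n then ((2 * n + 1).choose (n - k) : ℤ) - (2 * n + 1).choose (n + k + 2) else 0) :=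
      (Finset.sum_subset (Finset.range_subset_range.2 (by omega)) (by
        intro k _ hk
        simp only [Finset.mem_range] at hk
        rw [if_neg (show ¬ k ≤ m by omega), zero_mul])).symm
    rw [sub, ← key m n h]
    apply Finset.sum_congr rfl
    intro k hk
    simp only [Finset.mem_range] at hk
    rw [if_pos (by omega), if_pos (by omega)]
  · have sub : ∑ k ∈ range N, _ = ∑ k ∈ range (n + 1),
        (if k ≤ m then ((2 * m + 1).choose (m - k) : ℤ) - (2 * m + 1).choose (m + k + 2) else 0) *
          (if k ≤ n then ((2 * n + 1).choose (n - k) : ℤ) - (2 * n + 1).choose (n + k + 2) else 0) :=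
      (Finset.sum_subset (Finset.range_subset_range.2 (by omega)) (by
        intro k _ hk
        simp only [Finset.mem_range] at hk
        rw [if_neg (show ¬ k ≤ n by omega), mul_zero])).symm
    have := key n m h
    rw [sub]
    calc _ = ∑ k ∈ range (n + 1),
        (((2 * n + 1).choose (n - k) : ℤ) - (2 * n + 1).choose (n + k + 2)) *
          (((2 * m + 1).choose (m - k) : ℤ) - (2 * m + 1).choose (m + k + 2)) := by
          apply Finset.sum_congr rfl
          intro k hk
          simp only [Finset.mem_range] at hk
          rw [if_pos (by omega), if_pos (by omega), mul_comm]
      _ = catalan (n + m + 1) := key n m h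
      _ = catalan (m + n + 1) := by rw [Nat.add_comm n m]

theorem catalan_hankel_det_shift (n : ℕ) (hn : 0 < n) :
    (Matrix.of fun i j : Fin n => (catalan (i.1 + j.1 + 1) : ℤ)).det = 1 := by
  set L : Matrix (Fin n) (Fin n) ℤ := Matrix.of fun i k =>
    if (k : ℕ) ≤ (i : ℕ) then
      ((2 * (i : ℕ) + 1).choose ((i : ℕ) - (k : ℕ)) : ℤ) -
        (2 * (i : ℕ) + 1).choose ((i : ℕ) + (k : ℕ) + 2)
    else 0 with hL
  have factor : (Matrix.of fun i j : Fin n => (catalan (i.1 + j.1 + 1) : ℤ)) = L * Lᵀ := by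
    ext i j
    rw [Matrix.mul_apply]
    simp only [Matrix.transpose_apply, hL, Matrix.of_apply]
    rw [Fin.sum_univ_eq_sum_range
      (fun k => (if k ≤ (i : ℕ) then ((2 * (i : ℕ) + 1).choose ((i : ℕ) - k) : ℤ) -
          (2 * (i : ℕ) + 1).choose ((i : ℕ) + k + 2) else 0) *
        (if k ≤ (j : ℕ) then ((2 * (j : ℕ) + 1).choose ((j : ℕ) - k) : ℤ) -
          (2 * (j : ℕ) + 1).choose ((j : ℕ) + k + 2) else 0))]
    exact (key' i j n i.isLt j.isLt).symm
  have hLtri : L.BlockTriangular OrderDual.toDual := by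
    intro i j hij
    simp only [OrderDual.toDual_lt_toDual] at hij
    simp only [hL, Matrix.of_apply]
    rw [if_neg (by exact_mod_cast not_le.2 hij)]
  have hdiag : ∀ i : Fin n, L i i = 1 := by
    intro i
    simp only [hL, Matrix.of_apply]
    rw [if_pos le_rfl, Nat.sub_self, Nat.choose_zero_right,
      Nat.choose_eq_zero_of_lt (by omega)]
    simp
  have hdetL : L.det = 1 := by
    rw [Matrix.det_of_lowerTriangular L hLtri]
    simp [hdiag]
  rw [factor, Matrix.det_mul, Matrix.det_transpose, hdetL]
  ring
end

section
/- For all positive integers n, the determinant of the n×n Hankel matrix whose (i,j) entry is the Motzkin number M_{i+j} equals 1. -/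
/- The Motzkin number `M n`: the number of lattice paths from `(0,0)` to `(n,0)` with
steps `(1,1)`, `(1,0)`, `(1,-1)` that never go below the x-axis. A path of length `n` is
encoded as a function `f : Fin n → Fin 3`, step `i` having height change `1 - (f i)`. -/
open scoped Classical in
noncomputable def motzkin (n : ℕ) : ℕ :=
  (Finset.univ.filter (fun f : Fin n → Fin 3 =>
    (∑ i, (1 - ((f i : ℕ) : ℤ))) = 0 ∧
    ∀ m : ℕ, m ≤ n →
      0 ≤ ∑ i ∈ Finset.univ.filter (fun i : Fin n => (i : ℕ) < m),
        (1 - ((f i : ℕ) : ℤ)))).card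

/-! The Motzkin triangle `T n e` counts paths of length `n` that never go below the axis and end
at height `e`. Splitting a Motzkin path of length `i + j` after `i` steps and reversing the tail
gives `M (i + j) = ∑ₑ T i e * T j e`; algebraically, this is the symmetry of the one-step transfer
matrix `T i ↦ T (i + 1)`. Hence the Hankel matrix is `L * Lᵀ` with `L = (T i k)`, which is lower
unitriangular. -/

open Finset Function

namespace Motzkin

def triangle : ℕ → ℤ → ℕ
  | 0, e => if e = 0 then 1 else 0
  | n + 1, e => if 0 ≤ e then triangle n (e - 1) + triangle n e + triangle n (e + 1) else 0

lemma triangle_of_neg {n : ℕ} {e : ℤ} (he : e < 0) : triangle n e = 0 := by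
  cases n <;> simp [triangle, he.ne, he.not_ge]

lemma triangle_succ {n : ℕ} {e : ℤ} (he : 0 ≤ e) :
    triangle (n + 1) e = triangle n (e - 1) + triangle n e + triangle n (e + 1) := by
  simp [triangle, he]

lemma triangle_of_lt {n : ℕ} {e : ℤ} (h : (n : ℤ) < e) : triangle n e = 0 := by
  induction n generalizing e with
  | zero =>
    rw [Nat.cast_zero] at h
    simp [triangle, h.ne']
  | succ n ih =>
    push_cast at h
    rw [triangle_succ (by omega), ih (by omega), ih (by omega), ih (by omega)]

lemma triangle_self (n : ℕ) : triangle n n = 1 := by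
  induction n with
  | zero => simp [triangle]
  | succ n ih =>
    push_cast
    rw [triangle_succ (by omega), add_sub_cancel_right, ih, triangle_of_lt (by omega),
      triangle_of_lt (by omega)]

lemma support_triangle_subset (n : ℕ) : support (triangle n) ⊆ Set.Icc 0 n := fun _ he =>
  ⟨not_lt.1 fun h => he (triangle_of_neg h), not_lt.1 fun h => he (triangle_of_lt h)⟩

lemma hasFiniteSupport_triangle (n : ℕ) : (triangle n).HasFiniteSupport :=
  (Set.finite_Icc _ _).subset (support_triangle_subset n)

lemma finsum_sub_one_eq_add_one {M : Type*} [AddCommMonoid M] (f : ℤ → ℤ → M) :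
    ∑ᶠ e, f (e - 1) e = ∑ᶠ e, f e (e + 1) := by
  rw [← finsum_comp_equiv (Equiv.addRight 1)]
  simp

lemma finsum_triangle_succ_mul (i j : ℕ) :
    ∑ᶠ e, triangle (i + 1) e * triangle j e =
      ∑ᶠ e, triangle i (e - 1) * triangle j e + ∑ᶠ e, triangle i e * triangle j e +
        ∑ᶠ e, triangle i (e + 1) * triangle j e := by
  have hj := hasFiniteSupport_triangle j
  rw [← finsum_add_distrib (by fun_prop) (by fun_prop),
    ← finsum_add_distrib (by fun_prop) (by fun_prop)]
  congr 1 with e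
  rcases lt_or_ge e 0 with he | he
  · simp [triangle_of_neg he]
  · rw [triangle_succ he, add_mul, add_mul]

lemma finsum_triangle_succ_mul_eq_mul_succ (i j : ℕ) :
    ∑ᶠ e, triangle (i + 1) e * triangle j e = ∑ᶠ e, triangle i e * triangle (j + 1) e := by
  simp_rw [mul_comm (triangle i _) (triangle (j + 1) _), finsum_triangle_succ_mul,
    finsum_sub_one_eq_add_one fun a b => triangle i a * triangle j b,
    finsum_sub_one_eq_add_one fun a b => triangle j a * triangle i b]
  simp only [mul_comm (triangle i _)]
  ring

lemma finsum_triangle_mul (i j : ℕ) :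
    ∑ᶠ e, triangle i e * triangle j e = triangle (i + j) 0 := by
  induction i generalizing j with
  | zero =>
    rw [finsum_eq_single _ 0 fun e he => by simp [triangle, he]]
    simp [triangle]
  | succ i ih => rw [finsum_triangle_succ_mul_eq_mul_succ, ih, add_right_comm, add_assoc]

def height {n : ℕ} (f : Fin n → Fin 3) (m : ℕ) : ℤ :=
  ∑ i : Fin n with i.val < m, (1 - ((f i : ℕ) : ℤ))

def prefixes (n : ℕ) (e : ℤ) : Finset (Fin n → Fin 3) :=
  {f | height f n = e ∧ ∀ m ≤ n, 0 ≤ height f m}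

lemma height_of_le {n m : ℕ} (f : Fin n → Fin 3) (h : n ≤ m) :
    height f m = ∑ i, (1 - ((f i : ℕ) : ℤ)) := by
  rw [height, filter_true_of_mem fun i _ => i.isLt.trans_le h]

lemma height_snoc {n m : ℕ} (f : Fin n → Fin 3) (a : Fin 3) (hm : m ≤ n) :
    height (Fin.snoc f a : Fin (n + 1) → Fin 3) m = height f m := by
  simp only [height, sum_filter, Fin.sum_univ_castSucc, Fin.snoc_castSucc, Fin.val_castSucc,
    Fin.val_last, (show ¬n < m by omega), if_false, add_zero]

lemma height_snoc_succ {n : ℕ} (f : Fin n → Fin 3) (a : Fin 3) :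
    height (Fin.snoc f a : Fin (n + 1) → Fin 3) (n + 1) = height f n + (1 - ((a : ℕ) : ℤ)) := by
  rw [height_of_le _ le_rfl, height_of_le _ le_rfl, Fin.sum_univ_castSucc]
  simp only [Fin.snoc_castSucc, Fin.snoc_last]

lemma prefixes_of_neg {n : ℕ} {e : ℤ} (he : e < 0) : prefixes n e = ∅ := by
  ext f
  simp only [prefixes, mem_filter, mem_univ, true_and, notMem_empty, iff_false, not_and]
  exact fun hf hpos => (hpos n le_rfl).not_gt (hf ▸ he)

lemma snoc_mem_prefixes_iff {n : ℕ} {e : ℤ} (he : 0 ≤ e) (g : Fin n → Fin 3) (a : Fin 3) :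
    (Fin.snoc g a : Fin (n + 1) → Fin 3) ∈ prefixes (n + 1) e ↔
      g ∈ prefixes n (e - (1 - ((a : ℕ) : ℤ))) := by
  simp only [prefixes, mem_filter, mem_univ, true_and, height_snoc_succ]
  constructor
  · rintro ⟨hend, hpos⟩
    exact ⟨by omega, fun m hm => height_snoc g a hm ▸ hpos m (by omega)⟩
  · rintro ⟨hend, hpos⟩
    refine ⟨by omega, fun m hm => ?_⟩
    rcases Nat.lt_or_ge m (n + 1) with hm' | hm'
    · rw [height_snoc g a (by omega)]
      exact hpos m (by omega)
    · rw [show m = n + 1 by omega, height_snoc_succ]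
      omega

lemma card_prefixes_zero (e : ℤ) : #(prefixes 0 e) = if e = 0 then 1 else 0 := by
  split_ifs with he <;> simp [prefixes, height, he, Ne.symm]

lemma card_prefixes_succ {n : ℕ} {e : ℤ} (he : 0 ≤ e) :
    #(prefixes (n + 1) e) = #(prefixes n (e - 1)) + #(prefixes n e) + #(prefixes n (e + 1)) := by
  calc #(prefixes (n + 1) e)
      = ∑ p : Fin 3 × (Fin n → Fin 3), if Fin.snoc p.2 p.1 ∈ prefixes (n + 1) e then 1 else 0 := by
        rw [card_eq_sum_ite (subset_univ _), ← (Fin.snocEquiv fun _ => Fin 3).sum_comp]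
        rfl
    _ = ∑ a : Fin 3, #(prefixes n (e - (1 - ((a : ℕ) : ℤ)))) := by
        simp only [Fintype.sum_prod_type, snoc_mem_prefixes_iff he,
          ← card_eq_sum_ite (subset_univ _)]
    _ = _ := by simp [Fin.sum_univ_three]

lemma card_prefixes (n : ℕ) (e : ℤ) : #(prefixes n e) = triangle n e := by
  induction n generalizing e with
  | zero => rw [card_prefixes_zero, triangle]
  | succ n ih =>
    rcases lt_or_ge e 0 with he | he
    · rw [prefixes_of_neg he, triangle_of_neg he, card_empty]
    · rw [card_prefixes_succ he, triangle_succ he, ih, ih, ih]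

lemma motzkin_eq_triangle (n : ℕ) : motzkin n = triangle n 0 := by
  rw [← card_prefixes, motzkin, prefixes]
  congr! 3 with f
  rw [height_of_le f le_rfl]

lemma finsum_triangle_mul_eq_sum {N : ℕ} (i j : ℕ) (hi : i < N) :
    ∑ᶠ e, triangle i e * triangle j e = ∑ k : Fin N, triangle i k * triangle j k := by
  rw [finsum_eq_finsetSum_of_support_subset _
    (s := univ.map (Fin.valEmbedding.trans Nat.castEmbedding)), sum_map]
  · rfl
  intro e he
  obtain ⟨he0, hei⟩ := support_triangle_subset i (support_mul_subset_left _ _ he)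
  lift e to ℕ using he0
  simp only [coe_map, coe_univ, Set.image_univ, Set.mem_range]
  exact ⟨⟨e, by omega⟩, rfl⟩

end Motzkin

open Motzkin in
theorem motzkin_hankel_det_general (n : ℕ) :
    (Matrix.of fun i j : Fin n => (motzkin (i.1 + j.1) : ℤ)).det = 1 := by
  let L : Matrix (Fin n) (Fin n) ℤ := .of fun i k => triangle i k
  have hL : L.IsLowerTriangular := fun i k (hik : i < k) => by
    simp [L, triangle_of_lt (Nat.cast_lt.2 hik)]
  have hfactor : (Matrix.of fun i j : Fin n => (motzkin (i.1 + j.1) : ℤ)) = L * L.transpose := by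
    ext i j
    simp only [Matrix.of_apply, Matrix.mul_apply, Matrix.transpose_apply, L, motzkin_eq_triangle,
      ← finsum_triangle_mul, finsum_triangle_mul_eq_sum i j i.isLt]
    push_cast
    rfl
  rw [hfactor, Matrix.det_mul, Matrix.det_transpose, Matrix.det_of_isLowerTriangular L hL]
  simp [L, triangle_self]

theorem motzkin_hankel_det (n : ℕ) (hn : 0 < n) :
    (Matrix.of fun i j : Fin n => (motzkin (i.1 + j.1) : ℤ)).det = 1 :=
  motzkin_hankel_det_general n
end

section
/- For all positive integers n, the determinant of the n×n Hankel matrix whose (i,j) entry is the Motzkin prefix number MP_{i+j} equals 1. -/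
/- The Motzkin prefix number `MP n`: the number of lattice paths of `n` steps, each step
being `(1,1)`, `(1,0)` or `(1,-1)`, starting at the origin and never going below the
x-axis (arbitrary endpoint). A path is encoded as `f : Fin n → Fin 3`, step `i` having
height change `1 - (f i)`. -/
open scoped Classical in
noncomputable def motzkinPrefix (n : ℕ) : ℕ :=
  (Finset.univ.filter (fun f : Fin n → Fin 3 =>
    ∀ m : ℕ, m ≤ n →
      0 ≤ ∑ i ∈ Finset.univ.filter (fun i : Fin n => (i : ℕ) < m),
        (1 - ((f i : ℕ) : ℤ)))).card

/-!
The operator `step` sends `v` to `h ↦ ∑ v h'` over the heights `h'` reachable from `h` in one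
nonnegative Motzkin step. Counting paths by their first step gives `MP N = (step^N 1) 0`, and since
`step` is symmetric, `MP (i + j) = ∑ h, (step^i e₀) h * (step^j 1) h`. This factors the Hankel
matrix as `L * R` with `L i h = (step^i e₀) h` lower unitriangular and `R h j = (step^j 1) h`.
Subtracting from each row of `R` the previous one leaves an upper unitriangular matrix, because
`(step^j 1) h = 3^j` for `h ≥ j` while `(step^j 1) (j - 1) = 3^j - 1`.
-/

open Finset

theorem Fin.card_filter_cons {α : Type*} [Fintype α] {N : ℕ} (p : (Fin (N + 1) → α) → Prop)
    [DecidablePred p] :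
    #{f | p f} = ∑ c : α, #{g : Fin N → α | p (Fin.cons c g)} := by
  simp only [card_filter]
  rw [← Fintype.sum_equiv (Fin.consEquiv fun _ => α) _ _ fun _ => rfl, Fintype.sum_prod_type]
  rfl

namespace Motzkin

def IsNonnegFrom {N : ℕ} (h : ℤ) (f : Fin N → Fin 3) : Prop :=
  ∀ m ≤ N,
    0 ≤ h + ∑ i ∈ univ.filter (fun i : Fin N => (i : ℕ) < m), (1 - ((f i : ℕ) : ℤ))

theorem IsNonnegFrom.nonneg {N : ℕ} {h : ℤ} {f : Fin N → Fin 3} (hf : IsNonnegFrom h f) :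
    0 ≤ h := by
  simpa using hf 0 (Nat.zero_le N)

theorem sum_filter_lt_cons {N : ℕ} (c : Fin 3) (g : Fin N → Fin 3) (m : ℕ) :
    ∑ i ∈ univ.filter (fun i : Fin (N + 1) => (i : ℕ) < m + 1),
        (1 - (((Fin.cons c g : Fin (N + 1) → Fin 3) i : ℕ) : ℤ)) =
      1 - (c : ℤ) +
        ∑ i ∈ univ.filter (fun i : Fin N => (i : ℕ) < m), (1 - ((g i : ℕ) : ℤ)) := by
  simp only [sum_filter, Fin.sum_univ_succ, Fin.cons_zero, Fin.cons_succ, Fin.val_zero,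
    Fin.val_succ, Nat.zero_lt_succ, if_true, Nat.add_lt_add_iff_right]

theorem isNonnegFrom_cons {N : ℕ} {h : ℤ} {c : Fin 3} {g : Fin N → Fin 3} :
    IsNonnegFrom h (Fin.cons c g : Fin (N + 1) → Fin 3) ↔
      0 ≤ h ∧ IsNonnegFrom (h + 1 - c) g := by
  constructor
  · intro hf
    refine ⟨hf.nonneg, fun m hm => ?_⟩
    have := hf (m + 1) (by omega)
    rw [sum_filter_lt_cons] at this
    linarith
  · rintro ⟨h0, hg⟩ (_ | m) hm
    · simpa using h0
    · rw [sum_filter_lt_cons]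
      have := hg m (by omega)
      linarith

def step (v : ℕ → ℤ) : ℕ → ℤ
  | 0 => v 1 + v 0
  | h + 1 => v (h + 2) + v (h + 1) + v h

def pathsFrom (j : ℕ) : ℕ → ℤ := step^[j] 1

def pathsTo (i : ℕ) : ℕ → ℤ := step^[i] (Pi.single 0 1)

theorem pathsFrom_succ (j : ℕ) : pathsFrom (j + 1) = step (pathsFrom j) :=
  Function.iterate_succ_apply' _ _ _

theorem pathsTo_succ (i : ℕ) : pathsTo (i + 1) = step (pathsTo i) :=
  Function.iterate_succ_apply' _ _ _

theorem pathsFrom_of_le {j h : ℕ} (hjh : j ≤ h) : pathsFrom j h = 3 ^ j := by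
  induction j generalizing h with
  | zero => rfl
  | succ j ih =>
    obtain ⟨h, rfl⟩ := Nat.exists_eq_add_one_of_ne_zero (by omega : h ≠ 0)
    rw [pathsFrom_succ, step, ih (by omega), ih (by omega), ih (by omega)]
    ring

theorem pathsFrom_succ_self (j : ℕ) : pathsFrom (j + 1) j = 3 ^ (j + 1) - 1 := by
  induction j with
  | zero => rfl
  | succ j ih =>
    rw [pathsFrom_succ, step, ih, pathsFrom_of_le (by omega), pathsFrom_of_le le_rfl]
    ring

theorem pathsFrom_sub_pathsFrom_pred {j h : ℕ} (hjh : j ≤ h) :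
    pathsFrom j h - (if h = 0 then 0 else pathsFrom j (h - 1)) = if j = h then 1 else 0 := by
  cases h with
  | zero =>
    obtain rfl : j = 0 := by omega
    rfl
  | succ h =>
    rw [if_neg h.succ_ne_zero, Nat.add_sub_cancel, pathsFrom_of_le hjh]
    rcases hjh.eq_or_lt with rfl | hjh
    · rw [pathsFrom_succ_self, if_pos rfl]
      ring
    · rw [pathsFrom_of_le (by omega), if_neg hjh.ne, sub_self]

theorem pathsTo_of_lt {i h : ℕ} (hih : i < h) : pathsTo i h = 0 := by
  induction i generalizing h with
  | zero => exact Pi.single_eq_of_ne (by omega) _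
  | succ i ih =>
    obtain ⟨h, rfl⟩ := Nat.exists_eq_add_one_of_ne_zero (by omega : h ≠ 0)
    rw [pathsTo_succ, step, ih (by omega), ih (by omega), ih (by omega)]
    rfl

theorem pathsTo_self (i : ℕ) : pathsTo i i = 1 := by
  induction i with
  | zero => rfl
  | succ i ih =>
    rw [pathsTo_succ, step, pathsTo_of_lt (by omega), pathsTo_of_lt (by omega), ih]
    rfl

theorem sum_step_mul_eq_sum_mul_step {N : ℕ} {u : ℕ → ℤ} (hu : ∀ h, N ≤ h → u h = 0)
    (v : ℕ → ℤ) :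
    ∑ h ∈ range (N + 1), step u h * v h = ∑ h ∈ range (N + 1), u h * step v h := by
  have up := sum_range_succ (fun h => u (h + 1) * v h) N
  have up' := sum_range_succ' (fun h => u (h + 1) * v h) N
  have down := sum_range_succ (fun h => u h * v (h + 1)) N
  have down' := sum_range_succ' (fun h => u h * v (h + 1)) N
  rw [hu (N + 1) (by omega)] at up
  rw [hu N le_rfl] at down
  rw [sum_range_succ', sum_range_succ' (fun h => u h * step v h)]
  simp only [step, add_mul, mul_add, sum_add_distrib] at *
  linarith

theorem sum_pathsTo_mul_pathsFrom {i n : ℕ} (hin : i < n) (j : ℕ) :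
    ∑ h ∈ range n, pathsTo i h * pathsFrom j h = pathsFrom (i + j) 0 := by
  induction i generalizing j with
  | zero =>
    rw [sum_eq_single_of_mem 0 (mem_range.2 hin) fun h _ hh => by simp [pathsTo, hh]]
    simp [pathsTo]
  | succ i ih =>
    obtain ⟨N, rfl⟩ := Nat.exists_eq_add_one_of_ne_zero (by omega : n ≠ 0)
    rw [pathsTo_succ, sum_step_mul_eq_sum_mul_step fun h hh => pathsTo_of_lt (by omega),
      ← pathsFrom_succ, ih (by omega), Nat.add_right_comm, add_assoc]

open scoped Classical in
theorem card_isNonnegFrom_succ {N : ℕ} {h : ℤ} (hh : 0 ≤ h) :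
    #{f : Fin (N + 1) → Fin 3 | IsNonnegFrom h f} =
      #{g : Fin N → Fin 3 | IsNonnegFrom (h + 1) g} + #{g : Fin N → Fin 3 | IsNonnegFrom h g} +
        #{g : Fin N → Fin 3 | IsNonnegFrom (h - 1) g} := by
  have hdown : h + 1 - 2 = h - 1 := by ring
  simp only [Fin.card_filter_cons, Fin.sum_univ_three, isNonnegFrom_cons, hh, true_and,
    Fin.val_zero, Fin.val_one, Fin.val_two, Nat.cast_zero, Nat.cast_one, Nat.cast_ofNat, sub_zero,
    add_sub_cancel_right, hdown]

open scoped Classical in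
theorem pathsFrom_eq_card_isNonnegFrom (N h : ℕ) :
    pathsFrom N h = #{f : Fin N → Fin 3 | IsNonnegFrom h f} := by
  induction N generalizing h with
  | zero =>
    rw [filter_true_of_mem fun f _ m _ => by simp]
    rfl
  | succ N ih =>
    rw [pathsFrom_succ, card_isNonnegFrom_succ (Nat.cast_nonneg h), Nat.cast_add, Nat.cast_add]
    cases h with
    | zero =>
      have hempty : #{g : Fin N → Fin 3 | IsNonnegFrom (((0 : ℕ) : ℤ) - 1) g} = 0 :=
        card_eq_zero.2 <| filter_false_of_mem fun g _ hg => absurd hg.nonneg (by norm_num)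
      rw [step, ih, ih, hempty, Nat.cast_zero, add_zero, zero_add, Nat.cast_one]
    | succ h =>
      have hup : ((h + 1 : ℕ) : ℤ) + 1 = ((h + 2 : ℕ) : ℤ) := by push_cast; ring
      have hdown : ((h + 1 : ℕ) : ℤ) - 1 = h := by push_cast; ring
      rw [hup, hdown, step, ih, ih, ih]

theorem motzkinPrefix_eq_pathsFrom (N : ℕ) : (motzkinPrefix N : ℤ) = pathsFrom N 0 := by
  rw [pathsFrom_eq_card_isNonnegFrom, motzkinPrefix]
  simp [IsNonnegFrom]

theorem hankel_motzkinPrefix_eq_mul (n : ℕ) :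
    (Matrix.of fun i j : Fin n => (motzkinPrefix (i.1 + j.1) : ℤ)) =
      Matrix.of (fun i h : Fin n => pathsTo i h) * Matrix.of fun h j : Fin n => pathsFrom j h := by
  ext i j
  rw [Matrix.mul_apply, Matrix.of_apply, motzkinPrefix_eq_pathsFrom,
    ← sum_pathsTo_mul_pathsFrom i.2,
    ← Fin.sum_univ_eq_sum_range fun h => pathsTo i h * pathsFrom j h]
  rfl

theorem det_pathsTo (n : ℕ) : (Matrix.of fun i h : Fin n => pathsTo i h).det = 1 := by
  rw [Matrix.det_of_isLowerTriangular (Matrix.of fun i h : Fin n => pathsTo i h)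
    fun i h hih => pathsTo_of_lt hih]
  simp [pathsTo_self]

theorem det_pathsFrom (n : ℕ) : (Matrix.of fun h j : Fin n => pathsFrom j h).det = 1 := by
  cases n with
  | zero => exact Matrix.det_isEmpty
  | succ n =>
    rw [Matrix.det_eq_of_forall_row_eq_smul_add_pred (B := Matrix.of fun h j : Fin (n + 1) =>
      pathsFrom j h - if (h : ℕ) = 0 then 0 else pathsFrom j (h - 1)) 1 (by simp) (by simp),
      Matrix.det_of_isUpperTriangular]
    · exact prod_eq_one fun h _ => (pathsFrom_sub_pathsFrom_pred le_rfl).trans (if_pos rfl)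
    · intro h j hjh
      exact (pathsFrom_sub_pathsFrom_pred hjh.le).trans (if_neg (Fin.val_ne_of_ne hjh.ne))

end Motzkin

open Motzkin

theorem motzkinPrefix_hankel_det_general (n : ℕ) :
    (Matrix.of fun i j : Fin n => (motzkinPrefix (i.1 + j.1) : ℤ)).det = 1 := by
  rw [hankel_motzkinPrefix_eq_mul, Matrix.det_mul, det_pathsTo, det_pathsFrom, one_mul]

theorem motzkinPrefix_hankel_det (n : ℕ) (hn : 0 < n) :
    (Matrix.of fun i j : Fin n => (motzkinPrefix (i.1 + j.1) : ℤ)).det = 1 :=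
  motzkinPrefix_hankel_det_general n
end

section
/- For all positive integers n, the determinant of the n×n Hankel matrix whose (i,j) entry is binomial(i+j, floor((i+j)/2)) equals 1. -/
/-- Ballot-type numbers: `g i k = C(i, ⌊(i-k)/2⌋)` for `k ≤ i`, else `0`. -/
def gball (i k : ℕ) : ℕ := if k ≤ i then i.choose ((i - k) / 2) else 0

lemma gball_zero {i k : ℕ} (h : i < k) : gball i k = 0 := by
  simp [gball, Nat.not_le.mpr h]

lemma gball_of_le {i k : ℕ} (h : k ≤ i) : gball i k = i.choose ((i - k) / 2) :=
  if_pos h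

lemma gball_self (i : ℕ) : gball i i = 1 := by simp [gball]

lemma gball_rec (i k : ℕ) : gball (i + 1) k = gball i (k - 1) + gball i (k + 1) := by
  rcases k with _ | k
  · -- k = 0
    rw [gball_of_le (by omega), gball_of_le (by omega)]
    simp only [Nat.zero_sub, Nat.sub_zero]
    rcases Nat.eq_zero_or_pos i with rfl | hi
    · rw [gball_zero (by omega)]
      decide
    · rw [gball_of_le (by omega : 0 + 1 ≤ i)]
      rcases Nat.even_or_odd i with ⟨a, ha⟩ | ⟨a, ha⟩
      · subst ha
        obtain ⟨b, rfl⟩ : ∃ b, a = b + 1 := ⟨a - 1, by omega⟩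
        have h1 : (b + 1 + (b + 1) + 1) / 2 = b + 1 := by omega
        have h2 : (b + 1 + (b + 1)) / 2 = b + 1 := by omega
        have h3 : (b + 1 + (b + 1) - (0 + 1)) / 2 = b := by omega
        rw [h1, h2, h3]
        have := Nat.choose_succ_succ (b + 1 + (b + 1)) b
        simp only [Nat.succ_eq_add_one] at this
        omega
      · subst ha
        have h1 : (2 * a + 1 + 1) / 2 = a + 1 := by omega
        have h2 : (2 * a + 1) / 2 = a := by omega
        have h3 : (2 * a + 1 - (0 + 1)) / 2 = a := by omega
        rw [h1, h2, h3]
        have := Nat.choose_succ_succ (2 * a + 1) a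
        simp only [Nat.succ_eq_add_one] at this
        have hs : (2 * a + 1).choose (a + 1) = (2 * a + 1).choose a := by
          rw [← Nat.choose_symm (by omega : a + 1 ≤ 2 * a + 1)]
          congr 1
          omega
        omega
  · -- k = k' + 1
    rcases lt_trichotomy (k + 1) (i + 1) with hk | hk | hk
    · -- k < i
      rw [gball_of_le (by omega), gball_of_le (by omega : k + 1 - 1 ≤ i)]
      by_cases h2 : k + 1 + 1 ≤ i
      · rw [gball_of_le h2]
        have hm : 2 ≤ i - k := by omega
        obtain ⟨t, ht⟩ : ∃ t, (i - k) / 2 = t + 1 := ⟨(i - k) / 2 - 1, by omega⟩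
        have e1 : (i + 1 - (k + 1)) / 2 = t + 1 := by omega
        have e2 : (i - (k + 1 - 1)) / 2 = t + 1 := by omega
        have e3 : (i - (k + 1 + 1)) / 2 = t := by omega
        rw [e1, e2, e3]
        have := Nat.choose_succ_succ i t
        simp only [Nat.succ_eq_add_one] at this
        omega
      · -- i = k + 1
        have hik : i = k + 1 := by omega
        subst hik
        rw [gball_zero (by omega)]
        have e1 : (k + 1 + 1 - (k + 1)) / 2 = 0 := by omega
        have e2 : (k + 1 - (k + 1 - 1)) / 2 = 0 := by omega
        rw [e1, e2]
        simp
    · -- k = i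
      rw [gball_of_le (by omega), gball_of_le (by omega : k + 1 - 1 ≤ i),
        gball_zero (by omega : i < k + 1 + 1)]
      have e1 : (i + 1 - (k + 1)) / 2 = 0 := by omega
      have e2 : (i - (k + 1 - 1)) / 2 = 0 := by omega
      rw [e1, e2]
      simp
    · -- k + 1 > i + 1
      rw [gball_zero (by omega), gball_zero (by omega), gball_zero (by omega)]

/-- The inner product of rows `i` and `j` of the triangle. -/
def fball (i j : ℕ) : ℕ := ∑ k ∈ Finset.range (i + j + 1), gball i k * gball j k

lemma fball_shift (i j : ℕ) : fball (i + 1) j = fball i (j + 1) := by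
  unfold fball
  have hN1 : i + 1 + j + 1 = i + j + 1 + 1 := by omega
  have hN2 : i + (j + 1) + 1 = i + j + 1 + 1 := by omega
  rw [hN1, hN2]
  have e1 : ∑ k ∈ Finset.range (i + j + 1 + 1), gball (i + 1) k * gball j k
      = ∑ k ∈ Finset.range (i + j + 1 + 1),
          (gball i (k - 1) * gball j k + gball i (k + 1) * gball j k) :=
    Finset.sum_congr rfl (fun k _ => by rw [gball_rec, add_mul])
  have e2 : ∑ k ∈ Finset.range (i + j + 1 + 1), gball i k * gball (j + 1) k
      = ∑ k ∈ Finset.range (i + j + 1 + 1),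
          (gball i k * gball j (k - 1) + gball i k * gball j (k + 1)) :=
    Finset.sum_congr rfl (fun k _ => by rw [gball_rec, mul_add])
  rw [e1, e2, Finset.sum_add_distrib, Finset.sum_add_distrib]
  rw [Finset.sum_range_succ' (fun k => gball i (k - 1) * gball j k) (i + j + 1),
      Finset.sum_range_succ' (fun k => gball i k * gball j (k - 1)) (i + j + 1)]
  simp only [Nat.add_sub_cancel, Nat.zero_sub]
  rw [Finset.sum_range_succ (fun k => gball i (k + 1) * gball j k) (i + j + 1),
      Finset.sum_range_succ (fun k => gball i k * gball j (k + 1)) (i + j + 1)]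
  rw [gball_zero (i := i) (by omega : i < i + j + 1 + 1),
      gball_zero (i := j) (by omega : j < i + j + 1 + 1)]
  simp only [mul_zero, zero_mul, add_zero]
  omega

lemma fball_eq (i j : ℕ) : fball i j = (i + j).choose ((i + j) / 2) := by
  induction i generalizing j with
  | zero =>
    unfold fball
    simp only [Nat.zero_add]
    rw [Finset.sum_range_succ' (fun k => gball 0 k * gball j k) j]
    have h : ∀ k ∈ Finset.range j, gball 0 (k + 1) * gball j (k + 1) = 0 :=
      fun k _ => by rw [gball_zero (by omega)]; ring
    rw [Finset.sum_congr rfl h]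
    simp [gball]
  | succ i ih =>
    rw [fball_shift, ih (j + 1)]
    have : i + (j + 1) = i + 1 + j := by omega
    rw [this]

lemma sum_gball (i j N : ℕ) (h : i < N) :
    ∑ k ∈ Finset.range N, gball i k * gball j k = (i + j).choose ((i + j) / 2) := by
  have key : ∀ M, i < M →
      ∑ k ∈ Finset.range M, gball i k * gball j k
        = ∑ k ∈ Finset.range (i + 1), gball i k * gball j k := by
    intro M hM
    refine (Finset.sum_subset (Finset.range_subset_range.mpr hM) ?_).symm
    intro k hk hk'
    rw [gball_zero (by simp only [Finset.mem_range] at hk'; omega)]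
    ring
  rw [key N h, ← key (i + j + 1) (by omega), ← fball, fball_eq]

theorem central_binomial_hankel_det (n : ℕ) (hn : 0 < n) :
    (Matrix.of fun i j : Fin n =>
      ((i.1 + j.1).choose ((i.1 + j.1) / 2) : ℤ)).det = 1 := by
  set L : Matrix (Fin n) (Fin n) ℤ := Matrix.of fun i k => (gball i.1 k.1 : ℤ) with hL
  have hfac : (Matrix.of fun i j : Fin n =>
      ((i.1 + j.1).choose ((i.1 + j.1) / 2) : ℤ)) = L * L.transpose := by
    ext i j
    simp only [Matrix.mul_apply, Matrix.transpose_apply, Matrix.of_apply, hL]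
    rw [Fin.sum_univ_eq_sum_range (fun k => ((gball i.1 k : ℤ)) * (gball j.1 k : ℤ)) n]
    rw [← sum_gball i.1 j.1 n i.isLt]
    push_cast
    rfl
  have hlow : L.BlockTriangular OrderDual.toDual := by
    intro i j hij
    have : i.1 < j.1 := hij
    simp only [hL, Matrix.of_apply]
    exact_mod_cast congrArg (Nat.cast (R := ℤ)) (gball_zero this)
  have hdet : L.det = 1 := by
    rw [Matrix.det_of_lowerTriangular L hlow]
    simp [hL, gball_self]
  rw [hfac, Matrix.det_mul, Matrix.det_transpose, hdet]
  ring
end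

section
/- For all positive integers n, the determinant of the n×n Hankel matrix whose (i,j) entry is binomial(i+j+2, floor((i+j+2)/2)) equals n+1. -/
/-!
Let `W(i, k) = C(i, ⌊(i - k)/2⌋)` for `k ≤ i` (and `0` otherwise). It counts the ±1-walks of
length `i` on `ℕ` from `0` to `k` in which a down-step at `0` stays at `0`, so the rows of `W`
satisfy `W(i + 1, ·) = T (W(i, ·))` for the symmetric transition operator `T`. Symmetry of `T`
gives `⟨W(i + 1, ·), W(j, ·)⟩ = ⟨W(i, ·), W(j + 1, ·)⟩`, hence `W Wᵀ` is the Hankel matrix of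
the central binomials `C(m, ⌊m/2⌋)`. As `W` is unitriangular, the minor of `W Wᵀ` obtained by
deleting row and column `0` is `(adj (W Wᵀ))₀₀ = ∑ₖ ((W⁻¹)ₖ₀)²`, and the column `(W⁻¹)ₖ₀` is the
sign pattern `1, -1, -1, 1, 1, …`, which `T` annihilates. So the minor is the number of rows.
-/

open Finset Matrix

namespace Matrix

variable {m R : Type*} [Fintype m] [DecidableEq m] [CommRing R]

theorem adjugate_apply_of_mulVec_eq_single {A : Matrix m m R} (hA : A.det = 1) {v : m → R}
    {i : m} (hv : A *ᵥ v = Pi.single i 1) (k : m) : A.adjugate k i = v k := by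
  have hinv : A.adjugate *ᵥ (A *ᵥ v) = v := by
    rw [mulVec_mulVec, adjugate_mul, hA, one_smul, one_mulVec]
  rw [hv, mulVec_single] at hinv
  simpa using congrFun hinv k

theorem adjugate_mul_transpose_apply_self (A : Matrix m m R) (i : m) :
    (A * Aᵀ).adjugate i i = ∑ k, A.adjugate k i ^ 2 := by
  rw [adjugate_mul_distrib, ← adjugate_transpose, mul_apply]
  simp only [transpose_apply, sq]

theorem det_submatrix_succ_mul_transpose {n : ℕ} (A : Matrix (Fin (n + 1)) (Fin (n + 1)) R)
    (hA : A.det = 1) {v : Fin (n + 1) → R} (hv : A *ᵥ v = Pi.single 0 1) :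
    ((A * Aᵀ).submatrix Fin.succ Fin.succ).det = ∑ k, v k ^ 2 := by
  have hminor := adjugate_fin_succ_eq_det_submatrix (A * Aᵀ) 0 0
  simp only [Fin.val_zero, add_zero, pow_zero, one_mul, Fin.succAbove_zero] at hminor
  rw [← hminor, adjugate_mul_transpose_apply_self]
  simp only [adjugate_apply_of_mulVec_eq_single hA hv]

end Matrix

namespace CentralBinomialHankel

/-- The transition operator of the ±1-walk on `ℕ` whose down-step at `0` stays at `0`. -/
def reflStep {R : Type*} [Add R] (f : ℕ → R) : ℕ → R
  | 0 => f 0 + f 1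
  | k + 1 => f k + f (k + 2)

theorem sum_range_reflStep_mul_sub {R : Type*} [CommRing R] (f g : ℕ → R) (N : ℕ) :
    ∑ k ∈ range (N + 1), (reflStep f k * g k - f k * reflStep g k)
      = f (N + 1) * g N - f N * g (N + 1) := by
  induction N with
  | zero => simp only [zero_add, sum_range_one, reflStep]; ring
  | succ N ih => rw [sum_range_succ, ih]; simp only [reflStep]; ring

theorem sum_range_reflStep_mul {R : Type*} [CommRing R] {f : ℕ → R} (g : ℕ → R) {N : ℕ}
    (hN : f N = 0) (hN' : f (N + 1) = 0) :
    ∑ k ∈ range (N + 1), reflStep f k * g k = ∑ k ∈ range (N + 1), f k * reflStep g k := by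
  have := sum_range_reflStep_mul_sub f g N
  rw [hN, hN', sum_sub_distrib] at this
  linear_combination this

def walks (i k : ℕ) : ℤ := if k ≤ i then (i.choose ((i - k) / 2) : ℤ) else 0

theorem walks_of_lt {i k : ℕ} (h : i < k) : walks i k = 0 := if_neg (by omega)

theorem walks_self (i : ℕ) : walks i i = 1 := by simp [walks]

theorem walks_zero_right (i : ℕ) : walks i 0 = (i.choose (i / 2) : ℤ) := by simp [walks]

theorem walks_succ_zero (i : ℕ) : walks (i + 1) 0 = walks i 0 + walks i 1 := by
  simp only [walks_zero_right]
  rcases i.even_or_odd' with ⟨t, rfl | rfl⟩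
  · rcases t with _ | s
    · simp [walks]
    · rw [walks, if_pos (by omega), show (2 * (s + 1) - 1) / 2 = s by omega,
        show (2 * (s + 1) + 1) / 2 = s + 1 by omega, show 2 * (s + 1) / 2 = s + 1 by omega,
        Nat.choose_succ_succ']
      push_cast; ring
  · rw [walks, if_pos (by omega), show (2 * t + 1 - 1) / 2 = t by omega,
      show (2 * t + 1 + 1) / 2 = t + 1 by omega, show (2 * t + 1) / 2 = t by omega,
      Nat.choose_succ_succ', Nat.choose_symm_half]
    push_cast; ring

theorem walks_succ_succ (i k : ℕ) : walks (i + 1) (k + 1) = walks i k + walks i (k + 2) := by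
  rcases lt_or_ge i k with h | h
  · rw [walks_of_lt (by omega), walks_of_lt h, walks_of_lt (by omega), add_zero]
  rcases lt_or_ge i (k + 2) with h' | h'
  · rw [walks_of_lt h', walks, walks, if_pos (by omega), if_pos h,
      show (i + 1 - (k + 1)) / 2 = 0 by omega, show (i - k) / 2 = 0 by omega]
    simp
  · obtain ⟨j, hj⟩ : ∃ j, (i - (k + 2)) / 2 = j := ⟨_, rfl⟩
    rw [walks, walks, walks, if_pos (by omega), if_pos h, if_pos h', hj,
      show (i + 1 - (k + 1)) / 2 = j + 1 by omega, show (i - k) / 2 = j + 1 by omega,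
      Nat.choose_succ_succ']
    push_cast; ring

theorem walks_succ (i : ℕ) : walks (i + 1) = reflStep (walks i) := by
  funext k
  cases k with
  | zero => exact walks_succ_zero i
  | succ k => exact walks_succ_succ i k

theorem sum_walks_zero_mul (g : ℕ → ℤ) {N : ℕ} (h : 0 < N) :
    ∑ k ∈ range N, walks 0 k * g k = g 0 := by
  rw [sum_eq_single_of_mem 0 (mem_range.2 h) fun k _ hk => by
    rw [walks_of_lt (Nat.pos_of_ne_zero hk), zero_mul]]
  rw [walks_self, one_mul]

theorem sum_walks_mul_walks (i j N : ℕ) (h : i < N) :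
    ∑ k ∈ range N, walks i k * walks j k = ((i + j).choose ((i + j) / 2) : ℤ) := by
  induction i generalizing j with
  | zero => rw [sum_walks_zero_mul _ h, walks_zero_right, zero_add]
  | succ i ih =>
    obtain ⟨M, rfl⟩ : ∃ M, N = M + 1 := ⟨N - 1, by omega⟩
    rw [walks_succ, sum_range_reflStep_mul _ (walks_of_lt (by omega)) (walks_of_lt (by omega)),
      ← walks_succ, ih (j + 1) (by omega), show i + (j + 1) = i + 1 + j by omega]

def altSign (k : ℕ) : ℤ := (-1) ^ ((k + 1) / 2)

theorem altSign_sq (k : ℕ) : altSign k ^ 2 = 1 := by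
  rw [altSign, ← pow_mul, mul_comm, pow_mul, neg_one_sq, one_pow]

theorem reflStep_altSign : reflStep altSign = 0 := by
  funext k
  cases k with
  | zero => simp [reflStep, altSign]
  | succ k =>
    simp only [reflStep, altSign, Pi.zero_apply, show (k + 2 + 1) / 2 = (k + 1) / 2 + 1 by omega]
    ring

theorem sum_walks_mul_altSign (i N : ℕ) (h : i < N) :
    ∑ k ∈ range N, walks i k * altSign k = if i = 0 then 1 else 0 := by
  cases i with
  | zero => rw [sum_walks_zero_mul _ h, if_pos rfl]; rfl
  | succ i =>
    obtain ⟨M, rfl⟩ : ∃ M, N = M + 1 := ⟨N - 1, by omega⟩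
    rw [walks_succ, sum_range_reflStep_mul _ (walks_of_lt (by omega)) (walks_of_lt (by omega)),
      reflStep_altSign]
    simp

def walkMatrix (m : ℕ) : Matrix (Fin m) (Fin m) ℤ := of fun i k => walks i k

theorem det_walkMatrix (m : ℕ) : (walkMatrix m).det = 1 := by
  rw [det_of_isLowerTriangular (walkMatrix m) fun i k (hik : i < k) => walks_of_lt hik]
  simp [walkMatrix, walks_self]

theorem walkMatrix_mul_transpose_apply {m : ℕ} (i j : Fin m) :
    (walkMatrix m * (walkMatrix m)ᵀ) i j = ((i.1 + j.1).choose ((i.1 + j.1) / 2) : ℤ) := by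
  rw [mul_apply, ← sum_walks_mul_walks i j m i.2, ← Fin.sum_univ_eq_sum_range]
  rfl

theorem walkMatrix_mulVec_altSign (n : ℕ) :
    walkMatrix (n + 1) *ᵥ (fun k => altSign k) = Pi.single 0 1 := by
  funext i
  have h := sum_walks_mul_altSign i (n + 1) i.2
  rw [← Fin.sum_univ_eq_sum_range] at h
  simp only [Fin.val_eq_zero_iff] at h
  rw [Pi.single_apply, ← h]
  rfl

end CentralBinomialHankel

open CentralBinomialHankel in
theorem central_binomial_hankel_det_shift_two_general (n : ℕ) :
    (Matrix.of fun i j : Fin n =>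
      ((i.1 + j.1 + 2).choose ((i.1 + j.1 + 2) / 2) : ℤ)).det = (n : ℤ) + 1 := by
  have hankel : (Matrix.of fun i j : Fin n =>
      ((i.1 + j.1 + 2).choose ((i.1 + j.1 + 2) / 2) : ℤ))
      = (walkMatrix (n + 1) * (walkMatrix (n + 1))ᵀ).submatrix Fin.succ Fin.succ := by
    ext i j
    rw [submatrix_apply, walkMatrix_mul_transpose_apply, Fin.val_succ, Fin.val_succ,
      show i.1 + 1 + (j.1 + 1) = i.1 + j.1 + 2 by omega, of_apply]
  rw [hankel, det_submatrix_succ_mul_transpose _ (det_walkMatrix _) (walkMatrix_mulVec_altSign n)]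
  simp [altSign_sq]

theorem central_binomial_hankel_det_shift_two (n : ℕ) (hn : 0 < n) :
    (Matrix.of fun i j : Fin n =>
      ((i.1 + j.1 + 2).choose ((i.1 + j.1 + 2) / 2) : ℤ)).det = (n : ℤ) + 1 :=
  central_binomial_hankel_det_shift_two_general n
end

section
/- For all positive integers n, the determinant of the n×n Hankel matrix whose (i,j) entry is binomial(2(i+j)+1, i+j+1) equals 1. -/
open Finset

private lemma hankel_f_symm (i j t : ℕ) (hij : i ≤ j) (ht : t ≤ i) :
    (2*i+1).choose (2*i+1-t) * (2*j+1).choose (i+j+1-(2*i+1-t))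
      = (2*i+1).choose t * (2*j+1).choose (i+j+1-t) := by
  have h1 : (2*i+1).choose (2*i+1-t) = (2*i+1).choose t :=
    Nat.choose_symm (by omega)
  have h2 : i+j+1-(2*i+1-t) = j - i + t := by omega
  have h3 : (2*j+1).choose (j-i+t) = (2*j+1).choose (2*j+1-(j-i+t)) :=
    (Nat.choose_symm (by omega)).symm
  have h4 : 2*j+1-(j-i+t) = i+j+1-t := by omega
  rw [h1, h2, h3, h4]

private lemma hankel_half_sum (i j : ℕ) (hij : i ≤ j) :
    ∑ t ∈ range (i+1), (2*i+1).choose t * (2*j+1).choose (i+j+1-t)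
      = (2*(i+j)+1).choose (i+j+1) := by
  have hvand : (2*(i+j)+2).choose (i+j+1)
      = ∑ t ∈ range (i+j+2), (2*i+1).choose t * (2*j+1).choose (i+j+1-t) := by
    have h := Nat.add_choose_eq (2*i+1) (2*j+1) (i+j+1)
    rw [Finset.Nat.sum_antidiagonal_eq_sum_range_succ_mk] at h
    have he : 2*i+1 + (2*j+1) = 2*(i+j)+2 := by ring
    rw [he] at h
    exact h
  have htrunc : ∑ t ∈ range (i+j+2), (2*i+1).choose t * (2*j+1).choose (i+j+1-t)
      = ∑ t ∈ range (2*i+2), (2*i+1).choose t * (2*j+1).choose (i+j+1-t) := by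
    refine (Finset.sum_subset (Finset.range_subset_range.mpr (by omega)) ?_).symm
    intro t _ ht
    have h2i : 2*i+1 < t := by
      have := Finset.mem_range.not.mp ht; omega
    rw [Nat.choose_eq_zero_of_lt h2i, zero_mul]
  have hsplit : ∑ t ∈ range (2*i+2), (2*i+1).choose t * (2*j+1).choose (i+j+1-t)
      = 2 * ∑ t ∈ range (i+1), (2*i+1).choose t * (2*j+1).choose (i+j+1-t) := by
    have h2i : 2*i+2 = (i+1) + (i+1) := by omega
    rw [h2i, Finset.sum_range_add]
    have hsecond : ∑ t ∈ range (i+1),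
        (2*i+1).choose (i+1+t) * (2*j+1).choose (i+j+1-(i+1+t))
        = ∑ t ∈ range (i+1), (2*i+1).choose t * (2*j+1).choose (i+j+1-t) := by
      calc ∑ t ∈ range (i+1),
            (2*i+1).choose (i+1+t) * (2*j+1).choose (i+j+1-(i+1+t))
          = ∑ t ∈ range (i+1),
            (2*i+1).choose (i+1+(i+1-1-t)) * (2*j+1).choose (i+j+1-(i+1+(i+1-1-t))) :=
            (Finset.sum_range_reflect
              (fun t => (2*i+1).choose (i+1+t) * (2*j+1).choose (i+j+1-(i+1+t)))
              (i+1)).symm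
        _ = ∑ t ∈ range (i+1), (2*i+1).choose t * (2*j+1).choose (i+j+1-t) := by
            refine Finset.sum_congr rfl ?_
            intro k hk
            have hk' : k ≤ i := by have := Finset.mem_range.mp hk; omega
            have he : i+1+(i+1-1-k) = 2*i+1-k := by omega
            rw [he]
            exact hankel_f_symm i j k hij hk'
    rw [hsecond]; ring
  have hdouble : (2*(i+j)+2).choose (i+j+1) = 2 * (2*(i+j)+1).choose (i+j+1) := by
    have h1 : (2*(i+j)+2).choose ((i+j)+1)
        = (2*(i+j)+1).choose (i+j) + (2*(i+j)+1).choose ((i+j)+1) :=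
      Nat.choose_succ_succ (2*(i+j)+1) (i+j)
    have h2 : (2*(i+j)+1).choose (i+j) = (2*(i+j)+1).choose ((i+j)+1) := by
      have h := Nat.choose_symm (show (i+j)+1 ≤ 2*(i+j)+1 by omega)
      have hm : 2*(i+j)+1-((i+j)+1) = i+j := by omega
      rw [hm] at h
      exact h
    omega
  rw [htrunc, hsplit] at hvand
  omega

private lemma hankel_entry_nat (i j : ℕ) (hij : i ≤ j) :
    ∑ k ∈ range (i+1), (2*i+1).choose (i-k) * (2*j+1).choose (j-k)
      = (2*(i+j)+1).choose (i+j+1) := by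
  rw [← hankel_half_sum i j hij,
    ← Finset.sum_range_reflect
      (fun t => (2*i+1).choose t * (2*j+1).choose (i+j+1-t)) (i+1)]
  refine Finset.sum_congr rfl ?_
  intro k hk
  have hk' : k ≤ i := by have := Finset.mem_range.mp hk; omega
  have he1 : i+1-1-k = i-k := by omega
  have he2 : i+j+1-(i-k) = j+1+k := by omega
  have he3 : (2*j+1).choose (j+1+k) = (2*j+1).choose (j-k) := by
    have h := Nat.choose_symm (show j+1+k ≤ 2*j+1 by omega)
    have hm : 2*j+1-(j+1+k) = j-k := by omega
    rw [hm] at h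
    exact h.symm
  rw [he1, he2, he3]

theorem odd_central_binomial_hankel_det (n : ℕ) (hn : 0 < n) :
    (Matrix.of fun i j : Fin n =>
      ((2 * (i.1 + j.1) + 1).choose (i.1 + j.1 + 1) : ℤ)).det = 1 := by
  set L : Matrix (Fin n) (Fin n) ℤ := Matrix.of fun i k =>
    if k.1 ≤ i.1 then ((2*i.1+1).choose (i.1 - k.1) : ℤ) else 0 with hLdef
  have key : ∀ i j : Fin n, i.1 ≤ j.1 →
      ∑ k : Fin n, L i k * L j k
        = ((2 * (i.1 + j.1) + 1).choose (i.1 + j.1 + 1) : ℤ) := by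
    intro i j hij
    have hsum : ∑ k : Fin n, L i k * L j k
        = ∑ k ∈ range n,
          (if k ≤ i.1 then ((2*i.1+1).choose (i.1 - k) : ℤ) else 0) *
          (if k ≤ j.1 then ((2*j.1+1).choose (j.1 - k) : ℤ) else 0) := by
      rw [← Fin.sum_univ_eq_sum_range (fun k =>
        (if k ≤ i.1 then ((2*i.1+1).choose (i.1 - k) : ℤ) else 0) *
        (if k ≤ j.1 then ((2*j.1+1).choose (j.1 - k) : ℤ) else 0)) n]
      rfl
    rw [hsum]
    have htrunc : ∑ k ∈ range n,
          (if k ≤ i.1 then ((2*i.1+1).choose (i.1 - k) : ℤ) else 0) *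
          (if k ≤ j.1 then ((2*j.1+1).choose (j.1 - k) : ℤ) else 0)
        = ∑ k ∈ range (i.1+1),
          (if k ≤ i.1 then ((2*i.1+1).choose (i.1 - k) : ℤ) else 0) *
          (if k ≤ j.1 then ((2*j.1+1).choose (j.1 - k) : ℤ) else 0) := by
      refine (Finset.sum_subset (Finset.range_subset_range.mpr (by omega)) ?_).symm
      intro k _ hk
      have : ¬ k ≤ i.1 := by
        have := Finset.mem_range.not.mp hk; omega
      rw [if_neg this, zero_mul]
    rw [htrunc]
    have hcongr : ∑ k ∈ range (i.1+1),
          (if k ≤ i.1 then ((2*i.1+1).choose (i.1 - k) : ℤ) else 0) *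
          (if k ≤ j.1 then ((2*j.1+1).choose (j.1 - k) : ℤ) else 0)
        = ∑ k ∈ range (i.1+1),
          (((2*i.1+1).choose (i.1 - k) * (2*j.1+1).choose (j.1 - k) : ℕ) : ℤ) := by
      refine Finset.sum_congr rfl ?_
      intro k hk
      have hk' : k ≤ i.1 := by have := Finset.mem_range.mp hk; omega
      rw [if_pos hk', if_pos (le_trans hk' hij)]
      push_cast
      ring
    rw [hcongr, ← Nat.cast_sum, hankel_entry_nat i.1 j.1 hij]
  have hM : (Matrix.of fun i j : Fin n =>
      ((2 * (i.1 + j.1) + 1).choose (i.1 + j.1 + 1) : ℤ)) = L * L.transpose := by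
    ext i j
    rw [Matrix.mul_apply]
    simp only [Matrix.transpose_apply]
    rcases le_total i.1 j.1 with h | h
    · exact (key i j h).symm
    · have h1 := key j i h
      have h2 : ∑ k : Fin n, L i k * L j k = ∑ k : Fin n, L j k * L i k := by
        refine Finset.sum_congr rfl ?_
        intro k _
        ring
      have h3 : j.1 + i.1 = i.1 + j.1 := by omega
      rw [h3] at h1
      simp only [Matrix.of_apply]
      rw [h2, h1]
  rw [hM, Matrix.det_mul, Matrix.det_transpose]
  have hlow : L.BlockTriangular OrderDual.toDual := by
    intro i j hlt
    have : i < j := hlt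
    have hne : ¬ j.1 ≤ i.1 := by
      have hlt' : i.1 < j.1 := Fin.lt_def.mp this
      omega
    rw [hLdef]
    simp only [Matrix.of_apply]
    rw [if_neg hne]
  have hdet : L.det = 1 := by
    rw [Matrix.det_of_lowerTriangular L hlow]
    have : ∀ i : Fin n, L i i = 1 := by
      intro i
      simp [hLdef]
    simp [this]
  rw [hdet]; norm_num
end

section
/- For non-negative integers n, A, B with 0 ≤ A, B ≤ n, the double sum over j from 0 to n and l from 0 to n-j of (-1)^j · binomial(l+j, j) · binomial(n-l, j) · binomial(j, A-l) · binomial(j, B-n+l+j) equals (-1)^n if A = B, and 0 otherwise. -/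
/-!
Let `u = (1 + x)(1 + y)` and `D = (1 - x t)(1 - y t)`. Weighted by `x ^ l y ^ (n - j - l)`, the
inner sum over `l` is the coefficient of `t ^ (n - j)` in `D ^ (-(j + 1))`, so the left-hand side
is the coefficient of `x ^ A y ^ B` in the `t ^ n`-coefficient of `∑ⱼ (-u t) ^ j D ^ (-(j + 1))`
(the binomials in `j` come from `u ^ j = (1 + x) ^ j (1 + y) ^ j`). The terms with `j > n` only
contribute to higher powers of `t`, and the full geometric series sums to
`1 / (D + u t) = 1 / ((1 + t)(1 + x y t))`, whose `t ^ n`-coefficient is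
`(-1) ^ n ∑_{b ≤ n} (x y) ^ b`.
-/

def chz (a b : ℤ) : ℤ := if 0 ≤ b ∧ b ≤ a then (a.toNat.choose b.toNat : ℤ) else 0

open Finset

theorem chz_natCast (a b : ℕ) : chz a b = a.choose b := by
  unfold chz
  split_ifs with h
  · simp
  · rw [Nat.choose_eq_zero_of_lt (by omega), Nat.cast_zero]

namespace Polynomial

variable {R : Type*} [CommRing R]

theorem coeff_one_add_X_pow_mul_X_pow (j l A : ℕ) :
    ((1 + X : R[X]) ^ j * X ^ l).coeff A = (chz j ((A : ℤ) - l) : R) := by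
  rw [coeff_mul_X_pow']
  split_ifs with h
  · rw [coeff_one_add_X_pow, show (A : ℤ) - l = ((A - l : ℕ) : ℤ) by omega, chz_natCast,
      Int.cast_natCast]
  · rw [chz, if_neg (by omega), Int.cast_zero]

theorem coeff_coeff_neg_mul_one_add_pow_mul_monomial (a b j l k A B : ℕ) :
    (((-((1 + C X) * (1 + X : R[X][X]))) ^ j *
        ((a : R[X][X]) * (b : R[X][X]) * (C X ^ l * X ^ k))).coeff B).coeff A =
      (-1 : R) ^ j * a * b * chz j ((A : ℤ) - l) * chz j ((B : ℤ) - k) := by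
  have hsplit : (-((1 + C X) * (1 + X : R[X][X]))) ^ j *
        ((a : R[X][X]) * (b : R[X][X]) * (C X ^ l * X ^ k)) =
      C (C ((-1 : R) ^ j * a * b) * (1 + X) ^ j * X ^ l) * ((1 + X) ^ j * X ^ k) := by
    rw [neg_pow ((1 + C X) * (1 + X) : R[X][X]), mul_pow]
    simp only [map_mul, map_pow, map_add, map_neg, map_one, map_natCast]
    ring
  rw [hsplit, coeff_C_mul, coeff_one_add_X_pow_mul_X_pow, coeff_mul_intCast, mul_assoc,
    coeff_C_mul, coeff_one_add_X_pow_mul_X_pow]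

theorem coeff_coeff_neg_one_pow_mul_geom_sum_C_X_mul_X {n B : ℕ} (hB : B ≤ n) (A : ℕ) :
    (((-1) ^ n * ∑ b ∈ range (n + 1), (C X * X) ^ b : R[X][X]).coeff B).coeff A =
      if A = B then (-1) ^ n else 0 := by
  have hmonomials : (-1) ^ n * ∑ b ∈ range (n + 1), (C X * X) ^ b =
      ∑ b ∈ range (n + 1), C (C ((-1) ^ n) * X ^ b) * (X : R[X][X]) ^ b := by
    rw [mul_sum]
    exact sum_congr rfl fun b _ => by simp only [map_mul, map_pow, map_neg, map_one, mul_pow]; ring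
  simp only [hmonomials, finsetSum_coeff, coeff_C_mul_X_pow, sum_ite_eq, mem_range,
    show B < n + 1 by omega, if_true]

end Polynomial

theorem sum_neg_pow_mul_pow_succ_eq {S : Type*} [CommRing S] {c d e f : S}
    (he : e * d = 1) (hf : f * (d + c) = 1) (N : ℕ) :
    ∑ j ∈ range N, (-c) ^ j * e ^ (j + 1) = f - (-c * e) ^ N * f := by
  have hgeom := geom_sum_mul_neg (-c * e) N
  set G := ∑ j ∈ range N, (-c * e) ^ j
  have hsum : ∑ j ∈ range N, (-c) ^ j * e ^ (j + 1) = G * e := by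
    rw [sum_mul]
    exact sum_congr rfl fun j _ => by ring
  rw [hsum]
  linear_combination (-G * e) * hf + (G * f) * he + f * hgeom

namespace PowerSeries

variable {R : Type*} [CommRing R]

theorem rescale_mk_one_mul_one_sub_C_mul_X (a : R) : rescale a (mk 1) * (1 - C a * X) = 1 := by
  simpa using congrArg (rescale a) (mk_one_mul_one_sub_eq_one R)

theorem coeff_rescale_mk_one_pow_succ (a : R) (j m : ℕ) :
    coeff m (rescale a (mk 1) ^ (j + 1)) = ((j + m).choose j : R) * a ^ m := by
  rw [← map_pow, mk_one_pow_eq_mk_choose_add, coeff_rescale, coeff_mk, mul_comm]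

theorem coeff_rescale_mul_rescale_pow_succ (x y : R) (j m : ℕ) :
    coeff m ((rescale x (mk 1) * rescale y (mk 1)) ^ (j + 1)) =
      ∑ l ∈ range (m + 1),
        ((j + l).choose j : R) * ((j + (m - l)).choose j : R) * (x ^ l * y ^ (m - l)) := by
  rw [mul_pow, coeff_mul, Nat.sum_antidiagonal_eq_sum_range_succ_mk]
  refine sum_congr rfl fun l _ => ?_
  rw [coeff_rescale_mk_one_pow_succ, coeff_rescale_mk_one_pow_succ]
  ring

theorem coeff_rescale_neg_one_mul_rescale_neg (z : R) (n : ℕ) :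
    coeff n (rescale (-1) (mk 1) * rescale (-z) (mk 1)) =
      (-1) ^ n * ∑ b ∈ range (n + 1), z ^ b := by
  rw [coeff_mul, Nat.sum_antidiagonal_eq_sum_range_succ_mk, mul_sum, ← sum_range_reflect]
  refine sum_congr rfl fun l hl => ?_
  rw [mem_range] at hl
  simp only [coeff_rescale, coeff_mk, Pi.one_apply, mul_one, neg_pow z]
  rw [show n + 1 - 1 - l = n - l by omega, Nat.sub_sub_self (by omega), ← mul_assoc, ← pow_add,
    Nat.sub_add_cancel (by omega)]

end PowerSeries

open PowerSeries in
theorem sum_neg_pow_mul_sum_choose_mul_choose {R : Type*} [CommRing R] (x y : R) (n : ℕ) :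
    ∑ j ∈ range (n + 1), (-((1 + x) * (1 + y))) ^ j *
      ∑ l ∈ range (n - j + 1), ((j + l).choose j : R) * ((j + (n - j - l)).choose j : R) *
        (x ^ l * y ^ (n - j - l))
    = (-1) ^ n * ∑ b ∈ range (n + 1), (x * y) ^ b := by
  set u := (1 + x) * (1 + y)
  set e := rescale x (mk 1) * rescale y (mk 1)
  set f := rescale (-1) (mk 1) * rescale (-(x * y)) (mk 1)
  set c : R⟦X⟧ := C u * X
  set d : R⟦X⟧ := (1 - C x * X) * (1 - C y * X)
  have he : e * d = 1 := by
    calc e * d = (rescale x (mk 1) * (1 - C x * X)) * (rescale y (mk 1) * (1 - C y * X)) := by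
          ring
      _ = 1 := by
          rw [rescale_mk_one_mul_one_sub_C_mul_X, rescale_mk_one_mul_one_sub_C_mul_X, one_mul]
  have hf : f * (d + c) = 1 := by
    calc f * (d + c) = (rescale (-1) (mk 1) * (1 - C (-1) * X)) *
          (rescale (-(x * y)) (mk 1) * (1 - C (-(x * y)) * X)) := by
          simp only [d, c, u, f, map_neg, map_one, map_mul, map_add]
          ring
      _ = 1 := by
          rw [rescale_mk_one_mul_one_sub_C_mul_X, rescale_mk_one_mul_one_sub_C_mul_X, one_mul]
  have hneg_c_pow (j : ℕ) : (-c) ^ j = C ((-u) ^ j) * X ^ j := by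
    simp only [c, ← neg_mul, ← map_neg, mul_pow, map_pow]
  have hremainder : coeff n ((-c * e) ^ (n + 1) * f) = 0 := by
    rw [neg_mul, ← neg_mul, mul_pow, hneg_c_pow, mul_comm (C _), mul_assoc, mul_assoc,
      coeff_X_pow_mul', if_neg (by omega)]
  have h := congrArg (coeff n) (sum_neg_pow_mul_pow_succ_eq he hf (n + 1))
  rw [map_sum, map_sub, hremainder, sub_zero, coeff_rescale_neg_one_mul_rescale_neg] at h
  rw [← h]
  refine sum_congr rfl fun j hj => ?_
  rw [mem_range] at hj
  rw [hneg_c_pow, mul_assoc, coeff_C_mul, coeff_X_pow_mul', if_pos (by omega),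
    coeff_rescale_mul_rescale_pow_succ]

open Polynomial in
theorem double_sum_binomial_identity_general (n A B : ℕ) (hB : B ≤ n) :
    ∑ j ∈ Finset.range (n + 1), ∑ l ∈ Finset.range (n - j + 1),
      (-1 : ℤ) ^ j * chz ((l : ℤ) + j) j * chz ((n : ℤ) - l) j *
        chz (j : ℤ) ((A : ℤ) - l) * chz (j : ℤ) ((B : ℤ) - n + l + j) =
      if A = B then (-1 : ℤ) ^ n else 0 := by
  have h := congrArg (fun p : ℤ[X][X] => (p.coeff B).coeff A)
    (sum_neg_pow_mul_sum_choose_mul_choose (C X) X n)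
  simp only [coeff_coeff_neg_one_pow_mul_geom_sum_C_X_mul_X hB] at h
  rw [← h, finsetSum_coeff, finsetSum_coeff]
  refine sum_congr rfl fun j hj => ?_
  rw [mul_sum, finsetSum_coeff, finsetSum_coeff]
  refine sum_congr rfl fun l hl => ?_
  rw [mem_range] at hj hl
  rw [coeff_coeff_neg_mul_one_add_pow_mul_monomial,
    show (l : ℤ) + j = ((j + l : ℕ) : ℤ) by push_cast; ring,
    show (n : ℤ) - l = ((j + (n - j - l) : ℕ) : ℤ) by omega,
    show (B : ℤ) - n + l + j = B - ((n - j - l : ℕ) : ℤ) by omega,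
    chz_natCast, chz_natCast, Int.cast_id, Int.cast_id]

theorem double_sum_binomial_identity (n A B : ℕ) (hA : A ≤ n) (hB : B ≤ n) :
    ∑ j ∈ Finset.range (n + 1), ∑ l ∈ Finset.range (n - j + 1),
      (-1 : ℤ) ^ j * chz ((l : ℤ) + j) j * chz ((n : ℤ) - l) j *
        chz (j : ℤ) ((A : ℤ) - l) * chz (j : ℤ) ((B : ℤ) - n + l + j) =
      if A = B then (-1 : ℤ) ^ n else 0 :=
  double_sum_binomial_identity_general n A B hB
end
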